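/- arXiv:2303.15981 — 4 statements merged into one kernel-verified Lean document; each statement's English description precedes it below -/
import Mathlib

section
/- Let X be a topological space and let 𝒪' ≪ 𝒪 be a super-refinement of open covers of X. Then every child map f: 𝒪' → X induces a well-defined chain map f_*: C_*(N(𝒪')) → 𝒞_*(X,𝒪), given on generators by [O'_0,…,O'_n] ↦ [f(O'_0),…,f(O'_n)]; in particular, whenever O'_0 ∩ … ∩ O'_n ≠ ∅, the discrete simplex [f(O'_0),…,f(O'_n)] is 𝒪-tiny. Moreover, for any two child maps f, g: 𝒪' → X, the induced chain maps f_*, g_*: C_*(N(𝒪')) → 𝒞_*(X,𝒪) are chain-homotopic via a chain homotopy taking values in 𝒞_*(X,𝒪). -/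
/-- Discrete chains with `m` vertices: the free `ℤ`-module on ordered `m`-tuples of points. -/
abbrev DChain (α : Type*) (m : ℕ) := (Fin m → α) →₀ ℤ

/-- The `i`-th face operator on discrete chains, deleting the `i`-th vertex. -/
noncomputable def dface {α : Type*} {m : ℕ} (i : Fin (m + 1)) :
    DChain α (m + 1) →ₗ[ℤ] DChain α m :=
  Finsupp.lmapDomain ℤ ℤ (fun σ => σ ∘ i.succAbove)

/-- The simplicial boundary operator on discrete chains:
`∂[x₀,…,xₙ] = ∑ i, (-1)^i [x₀,…,x̂ᵢ,…,xₙ]`. -/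
noncomputable def dbd {α : Type*} {m : ℕ} : DChain α (m + 1) →ₗ[ℤ] DChain α m :=
  ∑ i : Fin (m + 1), ((-1 : ℤ) ^ (i : ℕ)) • dface i

/-- The chain map induced by a map on vertices. -/
noncomputable def vmap {α β : Type*} (f : α → β) {m : ℕ} : DChain α m →ₗ[ℤ] DChain β m :=
  Finsupp.lmapDomain ℤ ℤ (fun σ => f ∘ σ)

/-- The support of a discrete chain: the set of vertices appearing in its
cancellation-free expression. -/
def chainSupp {α : Type*} {m : ℕ} (c : DChain α m) : Set α :=
  ⋃ σ ∈ c.support, Set.range σ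

/-- An open cover of a topological space. -/
def IsOpenCover {X : Type*} [TopologicalSpace X] (O : Set (Set X)) : Prop :=
  (∀ U ∈ O, IsOpen U) ∧ ⋃₀ O = Set.univ

/-- `O'` refines `O`: every element of `O'` is contained in some element of `O`. -/
def Refines {X : Type*} (O' O : Set (Set X)) : Prop :=
  ∀ U ∈ O', ∃ V ∈ O, U ⊆ V

/-- `O'` is a super-refinement of `O` (written `O' ≪ O`) if every point `x` has a *parent*:
an element of `O` containing every member of `O'` that contains `x`. -/
def SuperRefines {X : Type*} (O' O : Set (Set X)) : Prop :=
  ∀ x : X, ∃ U ∈ O, ∀ V ∈ O', x ∈ V → V ⊆ U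

/-- A subset is `O`-tiny if it is contained in a single element of `O`. -/
def Tiny {X : Type*} (O : Set (Set X)) (A : Set X) : Prop :=
  ∃ U ∈ O, A ⊆ U

/-- A discrete chain is `O`-fine if each of its simplices is `O`-tiny. -/
def FineChain {X : Type*} (O : Set (Set X)) {m : ℕ} (c : DChain X m) : Prop :=
  ∀ σ ∈ c.support, Tiny O (Set.range σ)

/-- A chain of tuples of sets is a nerve chain of the cover `O` if each of its simplices is a
tuple of elements of `O` with nonempty intersection. -/
def NerveChain {X : Type*} (O : Set (Set X)) {m : ℕ} (c : DChain (Set X) m) : Prop :=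
  ∀ τ ∈ c.support, (∀ i, τ i ∈ O) ∧ (⋂ i, τ i).Nonempty


/-! A nerve simplex `[O'₀,…,O'ₙ]` has a point `x` in its intersection, and the parent of `x`
contains every `O'ᵢ`, hence every `f O'ᵢ` and `g O'ᵢ`: this gives all tininess claims.
The chain homotopy comes from the cone construction: by induction on the degree,
`g τ - f τ - H (∂τ)` is a cycle with vertices in `f(τ) ∪ g(τ)`, and `H τ` is its cone from the
vertex `f (τ 0)`. Since `∂ (cone x c) = c - cone x (∂c)`, this yields `∂H + H∂ = g - f`, and `H τ` stays
inside the parent of `τ`. -/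

open CategoryTheory

universe u

section Boundary

variable {α β : Type*}

@[simp]
lemma dface_single {m : ℕ} (i : Fin (m + 1)) (σ : Fin (m + 1) → α) (a : ℤ) :
    dface i (Finsupp.single σ a) = Finsupp.single (σ ∘ i.succAbove) a :=
  Finsupp.mapDomain_single

@[simp]
lemma vmap_single {m : ℕ} (f : α → β) (σ : Fin m → α) (a : ℤ) :
    vmap f (Finsupp.single σ a) = Finsupp.single (f ∘ σ) a :=
  Finsupp.mapDomain_single

lemma dbd_single {m : ℕ} (σ : Fin (m + 1) → α) (a : ℤ) :
    dbd (Finsupp.single σ a) =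
      ∑ i : Fin (m + 1), (-1 : ℤ) ^ (i : ℕ) • Finsupp.single (σ ∘ i.succAbove) a := by
  simp only [dbd, LinearMap.sum_apply, LinearMap.smul_apply, dface_single]

lemma dbd_vmap {m : ℕ} (f : α → β) (c : DChain α (m + 1)) :
    dbd (vmap f c) = vmap f (dbd c) := by
  induction c using Finsupp.induction_linear with
  | zero => simp
  | add c d hc hd => simp only [map_add, hc, hd]
  | single σ a =>
    simp only [dbd_single, vmap_single, map_sum, map_smul, Function.comp_assoc]

lemma vmap_eq_vmap_fin_zero (f g : α → β) (c : DChain α 0) : vmap f c = vmap g c := by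
  unfold vmap
  congr 2
  exact funext fun σ : Fin 0 → α => Subsingleton.elim (f ∘ σ) (g ∘ σ)

end Boundary

noncomputable def tupleChains (α : Type u) : SimplicialObject (ModuleCat.{u} ℤ) where
  obj n := ModuleCat.of ℤ (DChain α (n.unop.len + 1))
  map φ := ModuleCat.ofHom (Finsupp.lmapDomain ℤ ℤ fun σ => σ ∘ φ.unop.toOrderHom)
  map_id _ := by
    ext1
    exact Finsupp.lmapDomain_id ℤ ℤ
  map_comp φ ψ := by
    ext1
    exact Finsupp.lmapDomain_comp ℤ ℤ (fun σ => σ ∘ φ.unop.toOrderHom)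
      (fun σ => σ ∘ ψ.unop.toOrderHom)

lemma tupleChains_objD_hom (α : Type u) (n : ℕ) :
    (AlgebraicTopology.AlternatingFaceMapComplex.objD (tupleChains α) n).hom = dbd := by
  rw [AlgebraicTopology.AlternatingFaceMapComplex.objD, ModuleCat.hom_sum]
  rfl

lemma dbd_dbd {α : Type u} {m : ℕ} (c : DChain α (m + 2)) : dbd (dbd c) = 0 := by
  cases m with
  | zero =>
    -- `tupleChains α` has no simplices with zero vertices, so this degree is not covered by it.
    induction c using Finsupp.induction_linear with
    | zero => simp
    | add c d hc hd => simp only [map_add, hc, hd, add_zero]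
    | single σ a =>
      have h : ∀ (i : Fin 2) (j : Fin 1), (σ ∘ i.succAbove) ∘ j.succAbove = Fin.elim0 :=
        fun _ _ => Subsingleton.elim _ _
      simp only [dbd_single, map_smul, map_add, h, Fin.sum_univ_succ, Fin.sum_univ_zero,
        add_zero]
      simp
  | succ m =>
    have h := LinearMap.congr_fun (congrArg ModuleCat.Hom.hom
      (AlgebraicTopology.AlternatingFaceMapComplex.d_squared (tupleChains α) m)) c
    rwa [ModuleCat.hom_comp, tupleChains_objD_hom, tupleChains_objD_hom] at h

section Cone

variable {α β : Type*}

noncomputable def cone {m : ℕ} (x : α) : DChain α m →ₗ[ℤ] DChain α (m + 1) :=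
  Finsupp.lmapDomain ℤ ℤ fun σ => Fin.cons x σ

@[simp]
lemma cone_single {m : ℕ} (x : α) (σ : Fin m → α) (a : ℤ) :
    cone x (Finsupp.single σ a) = Finsupp.single (Fin.cons x σ) a :=
  Finsupp.mapDomain_single

lemma dbd_cone {m : ℕ} (x : α) (c : DChain α (m + 1)) :
    dbd (cone x c) = c - cone x (dbd c) := by
  induction c using Finsupp.induction_linear with
  | zero => simp
  | add c d hc hd => simp only [map_add, hc, hd]; abel
  | single σ a =>
    have hface : ∀ i : Fin (m + 1),
        (Fin.cons x σ : Fin (m + 2) → α) ∘ i.succ.succAbove = Fin.cons x (σ ∘ i.succAbove) :=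
      fun i => funext fun k => Fin.cases rfl (fun k => by simp [Fin.succ_succAbove_succ]) k
    rw [cone_single, dbd_single, Fin.sum_univ_succ, dbd_single, map_sum]
    simp only [map_smul, cone_single, hface, Fin.val_zero, pow_zero, one_smul, Fin.val_succ,
      pow_succ, mul_neg_one, neg_smul, Finset.sum_neg_distrib, ← sub_eq_add_neg]
    rfl

end Cone

section ConeHomotopy

variable {α β : Type*} (f g : α → β)

noncomputable def homotopyStep {m : ℕ} (K : DChain α m →ₗ[ℤ] DChain β (m + 1)) :
    DChain α (m + 1) →ₗ[ℤ] DChain β (m + 2) :=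
  Finsupp.lift (DChain β (m + 2)) ℤ (Fin (m + 1) → α) fun τ =>
    cone (f (τ 0)) (vmap g (Finsupp.single τ 1) - vmap f (Finsupp.single τ 1) -
      K (dbd (Finsupp.single τ 1)))

lemma homotopyStep_single {m : ℕ} (K : DChain α m →ₗ[ℤ] DChain β (m + 1))
    (τ : Fin (m + 1) → α) :
    homotopyStep f g K (Finsupp.single τ 1) =
      cone (f (τ 0)) (vmap g (Finsupp.single τ 1) - vmap f (Finsupp.single τ 1) -
        K (dbd (Finsupp.single τ 1))) := by
  simp [homotopyStep]

lemma dbd_homotopyStep_add {m : ℕ} (K : DChain α m →ₗ[ℤ] DChain β (m + 1))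
    (hK : ∀ c : DChain α (m + 1), dbd (vmap g c - vmap f c - K (dbd c)) = 0)
    (c : DChain α (m + 1)) :
    dbd (homotopyStep f g K c) + K (dbd c) = vmap g c - vmap f c := by
  induction c using Finsupp.induction_linear with
  | zero => simp
  | add c d hc hd =>
    simp only [map_add]
    rw [← sub_add_sub_comm, ← hc, ← hd]
    abel
  | single τ a =>
    rw [← mul_one a, ← smul_eq_mul, ← Finsupp.smul_single]
    simp only [map_smul, ← smul_add, ← smul_sub, homotopyStep_single, dbd_cone, hK, map_zero,
      sub_zero, sub_add_cancel]

noncomputable def coneHomotopy : ∀ m : ℕ, DChain α m →ₗ[ℤ] DChain β (m + 1)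
  | 0 => 0
  | m + 1 => homotopyStep f g (coneHomotopy m)

lemma dbd_coneHomotopy_add (m : ℕ) (c : DChain α (m + 1)) :
    dbd (coneHomotopy f g (m + 1) c) + coneHomotopy f g m (dbd c) = vmap g c - vmap f c := by
  induction m with
  | zero =>
    refine dbd_homotopyStep_add f g 0 (fun c => ?_) c
    rw [LinearMap.zero_apply, sub_zero, map_sub, dbd_vmap, dbd_vmap,
      vmap_eq_vmap_fin_zero f g, sub_self]
  | succ m ih =>
    refine dbd_homotopyStep_add f g _ (fun c => ?_) c
    have h := ih (dbd c)
    rw [dbd_dbd, map_zero, add_zero] at h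
    rw [map_sub, map_sub, dbd_vmap, dbd_vmap, h, sub_self]

end ConeHomotopy

section Support

variable {α β : Type*}

abbrev chainsIn (S : Set α) (m : ℕ) : Submodule ℤ (DChain α m) :=
  Finsupp.supported ℤ ℤ {σ | Set.range σ ⊆ S}

lemma chainsIn_mono {S T : Set α} (h : S ⊆ T) (m : ℕ) : chainsIn S m ≤ chainsIn T m :=
  Finsupp.supported_mono fun _ hσ => Set.Subset.trans hσ h

lemma single_mem_chainsIn {S : Set α} {m : ℕ} {σ : Fin m → α} (h : Set.range σ ⊆ S) (a : ℤ) :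
    Finsupp.single σ a ∈ chainsIn S m :=
  Finsupp.single_mem_supported ℤ a h

lemma map_mem_chainsIn {S : Set α} {T : Set β} {n k : ℕ} (L : DChain α n →ₗ[ℤ] DChain β k)
    (hL : ∀ σ : Fin n → α, Set.range σ ⊆ S → L (Finsupp.single σ 1) ∈ chainsIn T k)
    {c : DChain α n} (hc : c ∈ chainsIn S n) : L c ∈ chainsIn T k := by
  rw [chainsIn, Finsupp.supported_eq_span_single] at hc
  refine (Submodule.span_le (p := (chainsIn T k).comap L)).2 ?_ hc
  rintro _ ⟨σ, hσ, rfl⟩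
  exact hL σ hσ

lemma vmap_mem_chainsIn {S : Set α} {m : ℕ} (f : α → β) {c : DChain α m}
    (hc : c ∈ chainsIn S m) : vmap f c ∈ chainsIn (f '' S) m :=
  map_mem_chainsIn _ (fun σ hσ => by
    rw [vmap_single]
    exact single_mem_chainsIn (Set.range_comp f σ ▸ Set.image_mono hσ) 1) hc

lemma dbd_mem_chainsIn {S : Set α} {m : ℕ} {c : DChain α (m + 1)} (hc : c ∈ chainsIn S (m + 1)) :
    dbd c ∈ chainsIn S m :=
  map_mem_chainsIn _ (fun σ hσ => by
    rw [dbd_single]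
    exact Submodule.sum_mem _ fun i _ => Submodule.smul_mem _ _ <|
      single_mem_chainsIn ((Set.range_comp_subset_range _ σ).trans hσ) 1) hc

lemma cone_mem_chainsIn {S : Set α} {m : ℕ} {x : α} (hx : x ∈ S) {c : DChain α m}
    (hc : c ∈ chainsIn S m) : cone x c ∈ chainsIn S (m + 1) :=
  map_mem_chainsIn _ (fun σ hσ => by
    rw [cone_single]
    exact single_mem_chainsIn (by rw [Fin.range_cons]; exact Set.insert_subset hx hσ) 1) hc

lemma coneHomotopy_mem_chainsIn (f g : α → β) {S : Set α} (m : ℕ) {c : DChain α m}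
    (hc : c ∈ chainsIn S m) : coneHomotopy f g m c ∈ chainsIn (f '' S ∪ g '' S) (m + 1) := by
  induction m with
  | zero => exact Submodule.zero_mem _
  | succ m ih =>
    refine map_mem_chainsIn _ (fun τ hτ => ?_) hc
    have hsingle := single_mem_chainsIn hτ 1
    have hapex : f (τ 0) ∈ f '' S ∪ g '' S := Or.inl (Set.mem_image_of_mem f (hτ ⟨0, rfl⟩))
    rw [coneHomotopy, homotopyStep_single]
    refine cone_mem_chainsIn hapex (Submodule.sub_mem _ (Submodule.sub_mem _ ?_ ?_) ?_)
    · exact chainsIn_mono Set.subset_union_right _ (vmap_mem_chainsIn g hsingle)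
    · exact chainsIn_mono Set.subset_union_left _ (vmap_mem_chainsIn f hsingle)
    · exact ih (dbd_mem_chainsIn hsingle)

lemma exists_mem_support_single_of_mem_support_map {n k : ℕ}
    (L : DChain α n →ₗ[ℤ] DChain β k) (c : DChain α n) {σ : Fin k → β}
    (hσ : σ ∈ (L c).support) : ∃ τ ∈ c.support, σ ∈ (L (Finsupp.single τ 1)).support := by
  classical
  rw [← c.sum_single, Finsupp.sum, map_sum] at hσ
  obtain ⟨τ, hτ, hστ⟩ := Finsupp.mem_support_finsetSum σ hσ
  rw [← mul_one (c τ), ← smul_eq_mul, ← Finsupp.smul_single, map_smul] at hστ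
  exact ⟨τ, hτ, Finsupp.support_smul hστ⟩

lemma fineChain_of_single_mem_chainsIn {X : Type*} (O : Set (Set X)) {n k : ℕ}
    (L : DChain α n →ₗ[ℤ] DChain X k) (c : DChain α n) (h : ∀ τ ∈ c.support, ∃ U ∈ O, L (Finsupp.single τ 1) ∈ chainsIn U k) :
    FineChain O (L c) := fun _ hσ =>
  let ⟨τ, hτ, hστ⟩ := exists_mem_support_single_of_mem_support_map L c hσ
  let ⟨U, hU, hLτ⟩ := h τ hτ
  ⟨U, hU, (Finsupp.mem_supported _ _).1 hLτ hστ⟩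

end Support

section Nerve

variable {X : Type*}

def IsChildMap (O' : Set (Set X)) (f : Set X → X) : Prop :=
  ∀ U ∈ O', f U ∈ U

lemma SuperRefines.exists_image_subset {O' O : Set (Set X)} (hsr : SuperRefines O' O)
    {ι : Type*} {τ : ι → Set X} (hτ : ∀ i, τ i ∈ O') (hne : (⋂ i, τ i).Nonempty) :
    ∃ U ∈ O, ∀ g : Set X → X, IsChildMap O' g → g '' Set.range τ ⊆ U := by
  obtain ⟨x, hx⟩ := hne
  obtain ⟨U, hU, hparent⟩ := hsr x
  refine ⟨U, hU, fun g hg => ?_⟩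
  rintro _ ⟨_, ⟨i, rfl⟩, rfl⟩
  exact hparent (τ i) (hτ i) (Set.mem_iInter.1 hx i) (hg _ (hτ i))

end Nerve

theorem childMap_chainMap_general {X : Type*} (O' O : Set (Set X))
    (hsr : SuperRefines O' O)
    (f : Set X → X) (hf : ∀ U ∈ O', f U ∈ U) :
    (∀ (m : ℕ) (τ : Fin (m + 1) → Set X), (∀ i, τ i ∈ O') → (⋂ i, τ i).Nonempty →
      Tiny O (Set.range (fun j => f (τ j)))) ∧
    (∀ (m : ℕ) (c : DChain (Set X) (m + 1)), NerveChain O' c → FineChain O (vmap f c)) ∧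
    (∀ (m : ℕ) (c : DChain (Set X) (m + 2)), dbd (vmap f c) = vmap f (dbd c)) ∧
    (∀ g : Set X → X, (∀ U ∈ O', g U ∈ U) →
      ∃ H : ∀ m : ℕ, DChain (Set X) (m + 1) →ₗ[ℤ] DChain X (m + 2),
        (∀ (m : ℕ) (c : DChain (Set X) (m + 1)), NerveChain O' c → FineChain O (H m c)) ∧
        (∀ c : DChain (Set X) 1, NerveChain O' c →
          dbd (H 0 c) = vmap g c - vmap f c) ∧
        (∀ (m : ℕ) (c : DChain (Set X) (m + 2)), NerveChain O' c →
          dbd (H (m + 1) c) + H m (dbd c) = vmap g c - vmap f c)) := by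
  have parent {m : ℕ} {c : DChain (Set X) m} (hc : NerveChain O' c) {τ} (hτ : τ ∈ c.support) :=
    hsr.exists_image_subset (hc τ hτ).1 (hc τ hτ).2
  refine ⟨fun m τ hτ hne => ?_, fun m c hc => ?_, fun m c => dbd_vmap f c, fun g hg => ?_⟩
  · obtain ⟨U, hU, himage⟩ := hsr.exists_image_subset hτ hne
    exact ⟨U, hU, Set.range_comp f τ ▸ himage f hf⟩
  · refine fineChain_of_single_mem_chainsIn O _ c fun τ hτ => ?_
    obtain ⟨U, hU, himage⟩ := parent hc hτ
    exact ⟨U, hU, chainsIn_mono (himage f hf) _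
      (vmap_mem_chainsIn f (single_mem_chainsIn subset_rfl 1))⟩
  · refine ⟨fun m => coneHomotopy f g (m + 1), fun m c hc => ?_,
      fun c _ => by simpa [coneHomotopy] using dbd_coneHomotopy_add f g 0 c,
      fun m c _ => dbd_coneHomotopy_add f g (m + 1) c⟩
    refine fineChain_of_single_mem_chainsIn O _ c fun τ hτ => ?_
    obtain ⟨U, hU, himage⟩ := parent hc hτ
    exact ⟨U, hU, chainsIn_mono (Set.union_subset (himage f hf) (himage g hg)) _
      (coneHomotopy_mem_chainsIn f g _ (single_mem_chainsIn subset_rfl 1))⟩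

/-- Let `O' ≪ O` be a super-refinement of open covers of `X`.  Every child
map `f : O' → X` (i.e. `f U ∈ U` for `U ∈ O'`) induces a well-defined chain map
`f_* : C_*(N(O')) → 𝒞_*(X,O)`, `[O'_0,…,O'_n] ↦ [f O'_0,…,f O'_n]`: images of nerve
simplices are `O`-tiny, nerve chains are sent to `O`-fine chains, and the map commutes with
the boundary.  Moreover any two child maps `f, g` induce chain-homotopic maps, via a chain
homotopy with values in `𝒞_*(X,O)`. -/
theorem childMap_chainMap {X : Type*} [TopologicalSpace X] (O' O : Set (Set X))
    (hO' : IsOpenCover O') (hO : IsOpenCover O) (hsr : SuperRefines O' O)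
    (f : Set X → X) (hf : ∀ U ∈ O', f U ∈ U) :
    (∀ (m : ℕ) (τ : Fin (m + 1) → Set X), (∀ i, τ i ∈ O') → (⋂ i, τ i).Nonempty →
      Tiny O (Set.range (fun j => f (τ j)))) ∧
    (∀ (m : ℕ) (c : DChain (Set X) (m + 1)), NerveChain O' c → FineChain O (vmap f c)) ∧
    (∀ (m : ℕ) (c : DChain (Set X) (m + 2)), dbd (vmap f c) = vmap f (dbd c)) ∧
    (∀ g : Set X → X, (∀ U ∈ O', g U ∈ U) →
      ∃ H : ∀ m : ℕ, DChain (Set X) (m + 1) →ₗ[ℤ] DChain X (m + 2),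
        (∀ (m : ℕ) (c : DChain (Set X) (m + 1)), NerveChain O' c → FineChain O (H m c)) ∧
        (∀ c : DChain (Set X) 1, NerveChain O' c →
          dbd (H 0 c) = vmap g c - vmap f c) ∧
        (∀ (m : ℕ) (c : DChain (Set X) (m + 2)), NerveChain O' c →
          dbd (H (m + 1) c) + H m (dbd c) = vmap g c - vmap f c)) :=
  childMap_chainMap_general O' O hsr f hf
end

section
/- Let X be a topological space and let 𝒪'' ≪ 𝒪' ≪ 𝒪 be a chain of super-refinements of open covers of X. Then for every nonempty family {O''_i}_{i∈I} of elements of 𝒪'' that pairwise intersect (O''_i ∩ O''_j ≠ ∅ for all i,j ∈ I), there exists O ∈ 𝒪 with O''_i ⊆ O for all i ∈ I. -/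
theorem SuperRefines.exists_superset_of_inter_nonempty {X : Type*} {O' O : Set (Set X)}
    (h : SuperRefines O' O) {A B : Set X} (hA : A ∈ O') (hB : B ∈ O')
    (hAB : (A ∩ B).Nonempty) : ∃ W ∈ O, A ⊆ W ∧ B ⊆ W := by
  obtain ⟨y, hyA, hyB⟩ := hAB
  obtain ⟨W, hW, hparent⟩ := h y
  exact ⟨W, hW, hparent A hA hyA, hparent B hB hyB⟩

/-- Anchor everything at a point `x` of one member `V i₀`: each `V i` lies with `V i₀` in a
member of `O'` containing `x`, hence inside the parent of `x` in `O`. -/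
theorem superRefines_pairwise_intersecting_general {X : Type*}
    (O'' O' O : Set (Set X))
    (h2 : SuperRefines O'' O') (h1 : SuperRefines O' O)
    {I : Type*} [Nonempty I] (V : I → Set X) (hV : ∀ i, V i ∈ O'')
    (hpair : ∀ i j, (V i ∩ V j).Nonempty) :
    ∃ U ∈ O, ∀ i, V i ⊆ U := by
  obtain ⟨i₀⟩ := ‹Nonempty I›
  obtain ⟨x, hx, -⟩ := hpair i₀ i₀
  obtain ⟨U, hU, hparent⟩ := h1 x
  refine ⟨U, hU, fun i => ?_⟩
  obtain ⟨W, hW, hViW, hVi₀W⟩ :=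
    h2.exists_superset_of_inter_nonempty (hV i) (hV i₀) (hpair i i₀)
  exact hViW.trans (hparent W hW (hVi₀W hx))

/-- Given a chain of super-refinements `O'' ≪ O' ≪ O` of open covers of a
topological space `X`, any nonempty pairwise-intersecting family of elements of `O''` is
contained in a single element of `O`. -/
theorem superRefines_pairwise_intersecting {X : Type*} [TopologicalSpace X]
    (O'' O' O : Set (Set X))
    (hO'' : IsOpenCover O'') (hO' : IsOpenCover O') (hO : IsOpenCover O)
    (h2 : SuperRefines O'' O') (h1 : SuperRefines O' O)
    {I : Type*} [Nonempty I] (V : I → Set X) (hV : ∀ i, V i ∈ O'')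
    (hpair : ∀ i j, (V i ∩ V j).Nonempty) :
    ∃ U ∈ O, ∀ i, V i ⊆ U :=
  superRefines_pairwise_intersecting_general O'' O' O h2 h1 V hV hpair
end

section
/- Let X be a topological space equipped with an increasing sequence of subsets X_1 ⊆ X_2 ⊆ ⋯ whose union is X, such that each X_n with the subspace topology is compact and metrisable, and such that X carries the direct limit topology (U ⊆ X is open if and only if U ∩ X_n is open in X_n for every n). Then X is super-refinable: every open cover of X admits a super-refinement. -/
open Set Topology

theorem exists_seq_of_forall_exists_succ {α : Type*} {P : ℕ → α → Prop}
    {R : ℕ → α → α → Prop} {a : α} (ha : P 0 a)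
    (h : ∀ n x, P n x → ∃ y, P (n + 1) y ∧ R n x y) :
    ∃ f : ℕ → α, f 0 = a ∧ ∀ n, P n (f n) ∧ R n (f n) (f (n + 1)) := by
  choose! next hnext hR using h
  let f : ℕ → α := fun n => Nat.rec a next n
  have hf : ∀ n, P n (f n) := fun n => by
    induction n with
    | zero => exact ha
    | succ n ih => exact hnext n _ ih
  exact ⟨f, rfl, fun n => ⟨hf n, hR n _ (hf n)⟩⟩

section

variable {X : Type*} [TopologicalSpace X]

theorem IsClosed.exists_relOpen_closure_subset {Y C W : Set X} (hY : IsClosed Y) [NormalSpace Y]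
    (hC : IsClosed C) (hW : IsOpen W) (hCW : C ∩ Y ⊆ W) :
    ∃ U ⊆ Y, IsOpen ((↑) ⁻¹' U : Set Y) ∧ C ∩ Y ⊆ U ∧ closure U ⊆ W := by
  obtain ⟨u, huo, hCu, hu⟩ := normal_exists_closure_subset (hC.preimage continuous_subtype_val)
    (hW.preimage continuous_subtype_val) fun y hy => hCW ⟨hy, y.2⟩
  refine ⟨(↑) '' u, Subtype.coe_image_subset _ _,
    by rwa [Subtype.val_injective.preimage_image], fun x hx => ⟨⟨x, hx.2⟩, hCu hx.1, rfl⟩, ?_⟩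
  rw [hY.isClosedEmbedding_subtypeVal.closure_image_eq]
  exact image_subset_iff.2 hu

theorem IsClosed.exists_relOpen_separation {Y A B : Set X} (hY : IsClosed Y) [NormalSpace Y]
    (hA : IsClosed A) (hB : IsClosed B) (hAB : Disjoint A B) :
    ∃ U V, U ⊆ Y ∧ V ⊆ Y ∧ IsOpen ((↑) ⁻¹' U : Set Y) ∧ IsOpen ((↑) ⁻¹' V : Set Y) ∧
      A ∩ Y ⊆ U ∧ B ∩ Y ⊆ V ∧ Disjoint (A ∪ closure U) (B ∪ closure V) := by
  obtain ⟨U, hUY, hUo, hAU, hUB⟩ := hY.exists_relOpen_closure_subset hA hB.isOpen_compl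
    fun x hx => disjoint_left.1 hAB hx.1
  obtain ⟨V, hVY, hVo, hBV, hVAU⟩ := hY.exists_relOpen_closure_subset hB
    (hA.union isClosed_closure).isOpen_compl fun x hx hxAU =>
      hxAU.elim (fun hxA => disjoint_left.1 hAB hxA hx.1) fun hxU => hUB hxU hx.1
  refine ⟨U, V, hUY, hVY, hUo, hVo, hAU, hBV, disjoint_union_right.2 ⟨?_, ?_⟩⟩
  · exact disjoint_union_left.2 ⟨hAB, subset_compl_iff_disjoint_right.1 hUB⟩
  · exact subset_compl_iff_disjoint_left.1 hVAU

namespace Topology.IsCoherentWith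

theorem t1Space {S : Set (Set X)} (hS : IsCoherentWith S) (hT1 : ∀ s ∈ S, T1Space s) :
    T1Space X where
  t1 _ := hS.isClosed_iff.2 fun s hs =>
    haveI := hT1 s hs
    (subsingleton_singleton.preimage Subtype.val_injective).isClosed

theorem isClosed_of_isCompact_of_monotone {Y : ℕ → Set X} (hS : IsCoherentWith (range Y))
    (hY : Monotone Y) (hK : ∀ n, IsCompact (Y n)) [∀ n, T2Space (Y n)] (n : ℕ) :
    IsClosed (Y n) := by
  refine hS.isClosed_iff.2 (forall_mem_range.2 fun m => ?_)
  rcases le_total m n with hmn | hnm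
  · rw [preimage_eq_univ_iff.2 (by simpa using hY hmn)]
    exact isClosed_univ
  · refine (Subtype.isCompact_iff.2 ?_).isClosed
    rw [Subtype.image_preimage_coe, inter_eq_right.2 (hY hnm)]
    exact hK n

theorem isOpen_iUnion_of_monotone {Y : ℕ → Set X} (hS : IsCoherentWith (range Y))
    (hY : Monotone Y) {U : ℕ → Set X} (hU : Monotone U)
    (hUo : ∀ n, IsOpen ((↑) ⁻¹' U n : Set (Y n))) : IsOpen (⋃ n, U n) := by
  refine hS.isOpen_iff.2 (forall_mem_range.2 fun k => ?_)
  rw [← hU.iUnion_nat_add k, preimage_iUnion]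
  exact isOpen_iUnion fun n => (hUo (n + k)).preimage (continuous_inclusion (hY (by omega)))

theorem normalSpace_of_monotone {Y : ℕ → Set X}
    (hS : IsCoherentWith (range Y)) (hY : Monotone Y) (hcov : ⋃ n, Y n = univ)
    (hcl : ∀ n, IsClosed (Y n)) [∀ n, NormalSpace (Y n)] : NormalSpace X where
  normal A B hA hB hAB := by
    let P : ℕ → Set X × Set X → Prop := fun m p => p.1 ⊆ Y m ∧ p.2 ⊆ Y m ∧
      IsOpen ((↑) ⁻¹' p.1 : Set (Y m)) ∧ IsOpen ((↑) ⁻¹' p.2 : Set (Y m)) ∧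
      Disjoint (A ∪ closure p.1) (B ∪ closure p.2)
    let R : ℕ → Set X × Set X → Set X × Set X → Prop := fun m p q =>
      A ∩ Y (m + 1) ⊆ q.1 ∧ B ∩ Y (m + 1) ⊆ q.2 ∧ p.1 ⊆ q.1 ∧ p.2 ⊆ q.2
    have h0 : P 0 (∅, ∅) := by simp [P, hAB]
    have hstep : ∀ m p, P m p → ∃ q, P (m + 1) q ∧ R m p q := by
      rintro m ⟨U, V⟩ ⟨hUY, hVY, -, -, hUV⟩
      obtain ⟨U', V', hU'Y, hV'Y, hU'o, hV'o, hAU', hBV', hdisj⟩ :=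
        (hcl (m + 1)).exists_relOpen_separation (hA.union isClosed_closure)
          (hB.union isClosed_closure) hUV
      refine ⟨(U', V'), ⟨hU'Y, hV'Y, hU'o, hV'o, hdisj.mono (union_subset_union_left _ subset_union_left)
        (union_subset_union_left _ subset_union_left)⟩, ?_, ?_, ?_, ?_⟩
      · exact fun x hx => hAU' ⟨Or.inl hx.1, hx.2⟩
      · exact fun x hx => hBV' ⟨Or.inl hx.1, hx.2⟩
      · exact fun x hx => hAU' ⟨Or.inr (subset_closure hx), hY m.le_succ (hUY hx)⟩
      · exact fun x hx => hBV' ⟨Or.inr (subset_closure hx), hY m.le_succ (hVY hx)⟩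
    obtain ⟨f, -, hf⟩ := exists_seq_of_forall_exists_succ h0 hstep
    have hfU : Monotone fun n => (f n).1 := monotone_nat_of_le_succ fun n => (hf n).2.2.2.1
    have hfV : Monotone fun n => (f n).2 := monotone_nat_of_le_succ fun n => (hf n).2.2.2.2
    have hmem : ∀ x, ∃ m, x ∈ Y (m + 1) := fun x =>
      (mem_iUnion.1 (hcov ▸ mem_univ x)).imp fun m hm => hY m.le_succ hm
    refine ⟨⋃ n, (f n).1, ⋃ n, (f n).2, hS.isOpen_iUnion_of_monotone hY hfU
      (fun n => (hf n).1.2.2.1), hS.isOpen_iUnion_of_monotone hY hfV (fun n => (hf n).1.2.2.2.1),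
      fun x hx => ?_, fun x hx => ?_, ?_⟩
    · obtain ⟨m, hm⟩ := hmem x
      exact mem_iUnion.2 ⟨m + 1, (hf m).2.1 ⟨hx, hm⟩⟩
    · obtain ⟨m, hm⟩ := hmem x
      exact mem_iUnion.2 ⟨m + 1, (hf m).2.2.1 ⟨hx, hm⟩⟩
    · refine disjoint_iUnion_left.2 fun i => disjoint_iUnion_right.2 fun j => ?_
      exact (hf (max i j)).1.2.2.2.2.mono
        (subset_union_of_subset_right ((hfU (le_max_left i j)).trans subset_closure) _)
        (subset_union_of_subset_right ((hfV (le_max_right i j)).trans subset_closure) _)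

end Topology.IsCoherentWith

theorem exists_open_seq_closure_subset_succ [NormalSpace X] {K G : ℕ → Set X}
    (hK : ∀ n, IsClosed (K n)) (hG : ∀ n, IsOpen (G n)) (hGmono : Monotone G)
    (hKG : ∀ n, K n ⊆ G n) :
    ∃ H : ℕ → Set X, H 0 = ∅ ∧
      ∀ n, IsOpen (H n) ∧ closure (H n) ⊆ G n ∧ K n ∪ closure (H n) ⊆ H (n + 1) := by
  obtain ⟨H, hH0, hH⟩ := exists_seq_of_forall_exists_succ
    (P := fun n S => IsOpen S ∧ closure S ⊆ G n) (R := fun n S S' => K n ∪ closure S ⊆ S')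
    ⟨isOpen_empty, by simp⟩ fun n S ⟨_, hSG⟩ => by
      obtain ⟨S', hS'o, hS', hS'G⟩ := normal_exists_closure_subset
        ((hK n).union isClosed_closure) (hG (n + 1))
        (union_subset ((hKG n).trans (hGmono n.le_succ)) (hSG.trans (hGmono n.le_succ)))
      exact ⟨S', ⟨hS'o, hS'G⟩, hS'⟩
  exact ⟨H, hH0, fun n => ⟨(hH n).1.1, (hH n).1.2, (hH n).2⟩⟩

theorem exists_monotone_finset_compactCovering_subset [SigmaCompactSpace X] {α : Type*}
    {s : α → Set X} (hso : ∀ a, IsOpen (s a)) (hsU : ⋃ a, s a = univ) :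
    ∃ T : ℕ → Finset α, Monotone T ∧ ∀ m, compactCovering X m ⊆ ⋃ a ∈ T m, s a := by
  classical
  choose F hF using fun m => (isCompact_compactCovering X m).elim_finite_subcover s hso
    (hsU ▸ subset_univ _)
  refine ⟨fun m => (Finset.range (m + 1)).biUnion F, fun m n hmn => ?_, fun m => ?_⟩
  · exact Finset.biUnion_subset_biUnion_of_subset_left F
      (Finset.range_subset_range.2 (by omega))
  · exact (hF m).trans (biUnion_subset_biUnion_left fun a ha =>
      Finset.mem_biUnion.2 ⟨m, Finset.self_mem_range_succ m, ha⟩)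

theorem ParacompactSpace.of_sigmaCompactSpace_normalSpace [T2Space X] [NormalSpace X]
    [SigmaCompactSpace X] : ParacompactSpace X where
  locallyFinite_refinement α s hso hsU := by
    classical
    obtain ⟨T, hTmono, hKT⟩ := exists_monotone_finset_compactCovering_subset hso hsU
    have hGmono : Monotone fun m => ⋃ a ∈ T m, s a := fun m n hmn =>
      biUnion_subset_biUnion_left fun a ha => hTmono hmn ha
    obtain ⟨H, hH0, hH⟩ := exists_open_seq_closure_subset_succ
      (fun m => (isCompact_compactCovering X m).isClosed)
      (fun m => isOpen_biUnion fun a _ => hso a) hGmono hKT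
    have hHmono : Monotone H := monotone_nat_of_le_succ fun n =>
      subset_closure.trans (subset_union_right.trans (hH n).2.2)
    have hmemH : ∀ x, ∃ j, x ∈ H j := fun x =>
      have ⟨m, hm⟩ := mem_iUnion.1 ((iUnion_compactCovering X).symm ▸ mem_univ x)
      ⟨m + 1, (hH m).2.2 (Or.inl hm)⟩
    -- `m - 1` truncates to `0` at `m = 0`, where `H 0 = ∅`
    have hclH : ∀ m, closure (H (m - 1)) ⊆ H m := by
      rintro (_ | m)
      · simp [hH0]
      · exact subset_union_right.trans (hH m).2.2
    refine ⟨Σ m, T (m + 1), fun b => s b.2 ∩ (H (b.1 + 1) \ closure (H (b.1 - 1))),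
      fun b => (hso _).inter ((hH _).1.sdiff isClosed_closure), ?_, fun x => ?_,
      fun b => ⟨b.2, inter_subset_left⟩⟩
    · refine eq_univ_of_forall fun x => ?_
      obtain ⟨m, hm⟩ : ∃ m, Nat.find (hmemH x) = m + 1 :=
        Nat.exists_eq_succ_of_ne_zero fun h => by simpa [h, hH0] using Nat.find_spec (hmemH x)
      have hxH : x ∈ H (m + 1) := hm ▸ Nat.find_spec (hmemH x)
      have hxcl : x ∉ closure (H (m - 1)) := fun h => Nat.find_min (hmemH x) (by omega) (hclH m h)
      obtain ⟨a, ha, hxa⟩ := mem_iUnion₂.1 ((hH (m + 1)).2.1 (subset_closure hxH))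
      exact mem_iUnion.2 ⟨⟨m, a, ha⟩, hxa, hxH, hxcl⟩
    · obtain ⟨m₀, hm₀⟩ := hmemH x
      refine ⟨H m₀, (hH m₀).1.mem_nhds hm₀,
        ((finite_le_nat m₀).biUnion fun k _ => finite_range (Sigma.mk k)).subset ?_⟩
      rintro ⟨m, a⟩ ⟨y, ⟨-, -, hy⟩, hyH⟩
      refine mem_iUnion₂.2 ⟨m, (?_ : m ≤ m₀), a, rfl⟩
      by_contra! h
      exact hy (subset_closure (hHmono (Nat.le_sub_one_of_lt h) hyH))

theorem LocallyFinite.exists_isOpen_forall_inter_nonempty_subset {ι : Type*} {F W : ι → Set X}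
    (hF : LocallyFinite F) (hFc : ∀ i, IsClosed (F i)) (hW : ∀ i, IsOpen (W i))
    (hFW : ∀ i, F i ⊆ W i) (x : X) :
    ∃ A, IsOpen A ∧ x ∈ A ∧ ∀ i, (A ∩ F i).Nonempty → A ⊆ W i := by
  have hinter : (⋂ i ∈ {i | x ∈ F i}, W i) ∈ 𝓝 x :=
    ((hF.point_finite x).isOpen_biInter fun i _ => hW i).mem_nhds
      (mem_iInter₂.2 fun i hi => hFW i hi)
  obtain ⟨A, hA, hAo, hxA⟩ :=
    mem_nhds_iff.1 (Filter.inter_mem (hF.iInter_compl_mem_nhds hFc x) hinter)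
  refine ⟨A, hAo, hxA, fun i ⟨y, hyA, hyF⟩ => ?_⟩
  have hxF : x ∈ F i := by
    by_contra hxF
    exact mem_iInter₂.1 (hA hyA).1 i hxF hyF
  exact fun z hz => mem_iInter₂.1 (hA hz).2 i hxF

theorem exists_superRefines [ParacompactSpace X] [T2Space X] {O : Set (Set X)}
    (hO : IsOpenCover O) : ∃ O', IsOpenCover O' ∧ SuperRefines O' O := by
  obtain ⟨W, hWo, hWU, hWlf, hWO⟩ := precise_refinement (fun U : O => (U : Set X))
    (fun U => hO.1 U U.2) (by rw [← sUnion_eq_iUnion, hO.2])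
  obtain ⟨C, hCU, -, hCW⟩ := exists_iUnion_eq_closure_subset hWo hWlf.point_finite hWU
  choose A hAo hxA hA using (hWlf.subset hCW).exists_isOpen_forall_inter_nonempty_subset
    (fun i => isClosed_closure) hWo hCW
  refine ⟨range A, ⟨forall_mem_range.2 hAo, ?_⟩, fun y => ?_⟩
  · exact eq_univ_of_forall fun x => mem_sUnion_of_mem (hxA x) (mem_range_self x)
  · obtain ⟨i, hi⟩ := mem_iUnion.1 (hCU ▸ mem_univ y)
    exact ⟨i, i.2, forall_mem_range.2 fun x hyx =>
      (hA x i ⟨y, hyx, subset_closure hi⟩).trans (hWO i)⟩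

end

/-- Let `X` be a topological space equipped with an increasing sequence of
subsets `X_1 ⊆ X_2 ⊆ ⋯` whose union is `X`, such that each `X_n` with the subspace topology
is compact and metrisable, and such that `X` carries the direct limit topology (`U` is open
iff `U ∩ X_n` is open in `X_n` for all `n`).  Then `X` is super-refinable: every open cover
admits a super-refinement. -/
theorem directLimit_superRefinable {X : Type*} [TopologicalSpace X]
    (Xn : ℕ → Set X) (hmono : Monotone Xn) (hunion : (⋃ n, Xn n) = Set.univ)
    (hcpt : ∀ n, IsCompact (Xn n))
    (hmetr : ∀ n, TopologicalSpace.MetrizableSpace (Xn n))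
    (hdl : ∀ U : Set X, IsOpen U ↔ ∀ n, IsOpen (((↑) : Xn n → X) ⁻¹' U)) :
    ∀ O : Set (Set X), IsOpenCover O →
      ∃ O' : Set (Set X), IsOpenCover O' ∧ SuperRefines O' O := by
  intro O hO
  have hcoh : IsCoherentWith (range Xn) :=
    ⟨fun U hU => (hdl U).2 fun n => hU _ (mem_range_self n)⟩
  have : ∀ n, NormalSpace (Xn n) := fun n => by have := hmetr n; infer_instance
  have : ∀ n, T2Space (Xn n) := fun n => by have := hmetr n; infer_instance
  have : T1Space X := hcoh.t1Space (forall_mem_range.2 fun n => inferInstance)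
  have : NormalSpace X := hcoh.normalSpace_of_monotone hmono hunion
    (hcoh.isClosed_of_isCompact_of_monotone hmono hcpt)
  have : SigmaCompactSpace X := ⟨⟨Xn, hcpt, hunion⟩⟩
  have := ParacompactSpace.of_sigmaCompactSpace_normalSpace (X := X)
  exact exists_superRefines hO
end

section
/- Let (𝒮,ρ) be a compact metric space and let (p_j, s_j)_{j∈J} be a family of points p_j ∈ 𝒮 and radii s_j > 0 such that for every r > 0 only finitely many j ∈ J satisfy s_j ≥ r. For n ≥ 1 define X_n := 𝒮 − ⋃_{j∈J} {x ∈ 𝒮 : ρ(p_j,x) < s_j/n}. Then for every n ≥ 1 and ε > 0 there exists r > 0 such that X_n is ε-dense in the set 𝒮 − ⋃ {{x : ρ(p_j,x) < s_j/n} : j ∈ J, s_j ≥ r}, i.e. every point of the latter set lies within distance ε of a point of X_n. -/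
/-!
Removing only the balls of radius `s j ≥ r` leaves a closed set `F r`, and these sets decrease
to `X_n` as `r → 0` because every `s j` is positive. In a compact space a decreasing family of
closed sets eventually enters any open neighbourhood of its intersection, in particular the open
`ε`-thickening of `X_n`.
-/

open Metric Set

theorem exists_subset_thickening_iInter_of_directed {α ι : Type*} [PseudoMetricSpace α]
    [CompactSpace α] [Nonempty ι] {F : ι → Set α} (hF : Directed (· ⊇ ·) F)
    (hF_closed : ∀ i, IsClosed (F i)) {ε : ℝ} (hε : 0 < ε) :
    ∃ i, F i ⊆ thickening ε (⋂ i, F i) :=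
  exists_subset_nhds_of_compactSpace hF hF_closed fun _ hx =>
    isOpen_thickening.mem_nhds (self_subset_thickening hε _ hx)

theorem iUnion_pos_biUnion_le {J α : Type*} {s : J → ℝ} (hs : ∀ j, 0 < s j) (B : J → Set α) :
    ⋃ r : Ioi (0 : ℝ), ⋃ j ∈ {j | (r : ℝ) ≤ s j}, B j = ⋃ j, B j := by
  refine Subset.antisymm (iUnion_subset fun _ => iUnion₂_subset_iUnion _ _) ?_
  exact iUnion_subset fun j =>
    subset_iUnion_of_subset ⟨s j, hs j⟩ (subset_biUnion_of_mem (u := B) (le_refl (s j)))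

theorem dense_in_finite_ball_complement_general {𝒮 : Type*} [MetricSpace 𝒮] [CompactSpace 𝒮]
    {J : Type*} (p : J → 𝒮) (s : J → ℝ) (hs : ∀ j, 0 < s j)
    (n : ℕ) (ε : ℝ) (hε : 0 < ε) :
    ∃ r > 0, ∀ x : 𝒮, x ∉ (⋃ j ∈ {j | r ≤ s j}, Metric.ball (p j) (s j / n)) →
      ∃ y : 𝒮, (y ∉ ⋃ j, Metric.ball (p j) (s j / n)) ∧ dist x y ≤ ε := by
  set F : Ioi (0 : ℝ) → Set 𝒮 := fun r => (⋃ j ∈ {j | (r : ℝ) ≤ s j}, ball (p j) (s j / n))ᶜ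
  have hF_mono : Monotone F := fun r r' hrr' =>
    compl_subset_compl.2 <| biUnion_subset_biUnion_left fun _ hj =>
      le_trans (Subtype.coe_le_coe.2 hrr') hj
  have hF_closed : ∀ r, IsClosed (F r) := fun _ =>
    (isOpen_biUnion fun _ _ => isOpen_ball).isClosed_compl
  have hF_iInter : ⋂ r, F r = (⋃ j, ball (p j) (s j / n))ᶜ := by
    rw [← compl_iUnion, iUnion_pos_biUnion_le hs]
  obtain ⟨r, hr⟩ := exists_subset_thickening_iInter_of_directed hF_mono.directed_ge hF_closed hε
  refine ⟨r, r.2, fun x hx => ?_⟩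
  obtain ⟨y, hy, hxy⟩ := mem_thickening_iff.1 (hr hx)
  rw [hF_iInter] at hy
  exact ⟨y, hy, hxy.le⟩

/-- Let `(𝒮,ρ)` be a compact metric space and let `(p_j, s_j)_{j ∈ J}` be a
family of points and positive radii such that for every `r > 0` only finitely many `j`
satisfy `s_j ≥ r`.  For `n ≥ 1` let `X_n := 𝒮 − ⋃_j B(p_j, s_j/n)` (open balls).  Then for
every `n ≥ 1` and `ε > 0` there exists `r > 0` such that `X_n` is `ε`-dense in
`𝒮 − ⋃ {B(p_j, s_j/n) : s_j ≥ r}`. -/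
theorem dense_in_finite_ball_complement {𝒮 : Type*} [MetricSpace 𝒮] [CompactSpace 𝒮]
    {J : Type*} (p : J → 𝒮) (s : J → ℝ) (hs : ∀ j, 0 < s j)
    (hfin : ∀ r : ℝ, 0 < r → {j | r ≤ s j}.Finite)
    (n : ℕ) (hn : 1 ≤ n) (ε : ℝ) (hε : 0 < ε) :
    ∃ r > 0, ∀ x : 𝒮, x ∉ (⋃ j ∈ {j | r ≤ s j}, Metric.ball (p j) (s j / n)) →
      ∃ y : 𝒮, (y ∉ ⋃ j, Metric.ball (p j) (s j / n)) ∧ dist x y ≤ ε :=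
  dense_in_finite_ball_complement_general p s hs n ε hε
end
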